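/- Let F be an n × n matrix (n ≥ 1) with entries in a field. Then every term of the determinant expansion of F is zero (equivalently, for every permutation σ of {1, …, n} there is an index i with F(i, σ(i)) = 0) if and only if there exist a set R of rows and a set C of columns with |R| + |C| = n + 1 such that F(r, c) = 0 for all r ∈ R and c ∈ C (Theorem II of Frobenius). -/

import Mathlib

/-!
A permutation σ with `F i (σ i) ≠ 0` for all `i` is a perfect matching of rows to columns along
nonzero entries. By Hall's theorem none exists iff some set `S` of rows has fewer than `|S|`
columns carrying a nonzero entry in a row of `S`; any `|N| + 1` rows of `S`, with `N` that set of
columns, and the complement of `N` then span a zero block of size `n + 1`. Conversely, a zero block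
`R × C` with `|R| + |C| = n + 1` forces `σ(R)` to meet `C`, which gives a zero term.
-/

open Finset

namespace Matrix

variable {ι α : Type*} [Fintype ι] [DecidableEq ι] [Zero α]

theorem exists_perm_forall_ne_zero_of_hall [DecidableEq α] (M : Matrix ι ι α)
    (hall : ∀ s : Finset ι, #s ≤ #(s.biUnion fun i => {j | M i j ≠ 0})) :
    ∃ σ : Equiv.Perm ι, ∀ i, M i (σ i) ≠ 0 := by
  obtain ⟨f, hf, hmem⟩ := (all_card_le_biUnion_card_iff_exists_injective _).mp hall
  exact ⟨Equiv.ofBijective f (Finite.injective_iff_bijective.mp hf), fun i => by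
    simpa using hmem i⟩

theorem exists_zero_block_of_card_biUnion_lt [DecidableEq α] (M : Matrix ι ι α) {S : Finset ι}
    (hS : #(S.biUnion fun i => {j | M i j ≠ 0}) < #S) :
    ∃ R C : Finset ι, #R + #C = Fintype.card ι + 1 ∧ ∀ r ∈ R, ∀ c ∈ C, M r c = 0 := by
  set N := S.biUnion fun i => {j | M i j ≠ 0}
  obtain ⟨R, hRS, hR⟩ := exists_subset_card_eq (Nat.succ_le_of_lt hS)
  refine ⟨R, Nᶜ, ?_, fun r hr c hc => ?_⟩
  · rw [hR, card_compl]
    have := card_le_univ N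
    omega
  · by_contra hne
    exact mem_compl.mp hc (mem_biUnion.mpr ⟨r, hRS hr, by simpa using hne⟩)

theorem exists_zero_block_of_forall_perm_exists_eq_zero [DecidableEq α] (M : Matrix ι ι α)
    (h : ∀ σ : Equiv.Perm ι, ∃ i, M i (σ i) = 0) :
    ∃ R C : Finset ι, #R + #C = Fintype.card ι + 1 ∧ ∀ r ∈ R, ∀ c ∈ C, M r c = 0 := by
  by_cases hall : ∀ s : Finset ι, #s ≤ #(s.biUnion fun i => {j | M i j ≠ 0})
  · obtain ⟨σ, hσ⟩ := exists_perm_forall_ne_zero_of_hall M hall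
    obtain ⟨i, hi⟩ := h σ
    exact absurd hi (hσ i)
  · simp only [not_forall, not_le] at hall
    obtain ⟨S, hS⟩ := hall
    exact exists_zero_block_of_card_biUnion_lt M hS

theorem exists_eq_zero_of_zero_block (M : Matrix ι ι α) {R C : Finset ι}
    (hcard : #R + #C = Fintype.card ι + 1)
    (hzero : ∀ r ∈ R, ∀ c ∈ C, M r c = 0) (σ : Equiv.Perm ι) : ∃ i, M i (σ i) = 0 := by
  have hmeet : (R.map σ.toEmbedding ∩ C).Nonempty :=
    inter_nonempty_of_card_lt_card_add_card (subset_univ _) (subset_univ _)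
      (by rw [card_map, card_univ]; omega)
  obtain ⟨c, hc⟩ := hmeet
  obtain ⟨r, hr, rfl⟩ := mem_map.mp (mem_inter.mp hc).1
  exact ⟨r, hzero r hr _ (mem_inter.mp hc).2⟩

end Matrix

theorem frobenius_theorem_II {n : ℕ} {K : Type*} [Field K]
    (F : Matrix (Fin n) (Fin n) K) :
    (∀ σ : Equiv.Perm (Fin n), ∃ i : Fin n, F i (σ i) = 0) ↔
      ∃ (R C : Finset (Fin n)), R.card + C.card = n + 1 ∧
        ∀ r ∈ R, ∀ c ∈ C, F r c = 0 := by
  classical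
  constructor
  · simpa using F.exists_zero_block_of_forall_perm_exists_eq_zero
  · rintro ⟨R, C, hcard, hzero⟩
    exact F.exists_eq_zero_of_zero_block (by simpa using hcard) hzero
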